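/- (Euler Gem) For every integer d ≥ −1, every d-sphere G has Euler characteristic χ(G) = 1 + (−1)^d. -/
import Mathlib


open Finset Polynomial

namespace SphereFormula

variable {V : Type} [DecidableEq V]

/-- A finite abstract simplicial complex: a finite collection of nonempty finite sets
that is closed under taking nonempty subsets. -/
def IsComplex (G : Finset (Finset V)) : Prop :=
  ∀ x ∈ G, x.Nonempty ∧ ∀ y, y ⊆ x → y.Nonempty → y ∈ G

/-- `w x = (-1)^(dim x)` where `dim x = |x| - 1`. -/
def w (x : Finset V) : ℤ := (-1) ^ (x.card - 1)

/-- Euler characteristic of a finite set of simplices: `χ(A) = Σ_{x ∈ A} w x`. -/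
def chi (A : Finset (Finset V)) : ℤ := ∑ x ∈ A, w x

/-- The star `U(x) = {y ∈ G : x ⊆ y}`. -/
def star (G : Finset (Finset V)) (x : Finset V) : Finset (Finset V) :=
  G.filter fun y => x ⊆ y

/-- The unit ball `B(x) = {z ∈ G : z ⊆ y for some y ∈ U(x)}` (closure of the star). -/
def ball (G : Finset (Finset V)) (x : Finset V) : Finset (Finset V) :=
  G.filter fun z => ∃ y ∈ G, x ⊆ y ∧ z ⊆ y

/-- The unit sphere `S(x) = B(x) \ U(x)`. -/
def sphere (G : Finset (Finset V)) (x : Finset V) : Finset (Finset V) :=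
  ball G x \ star G x

/-- The vertex set of `G`: those `v` with `{v} ∈ G`. -/
def verts (G : Finset (Finset V)) : Finset V :=
  (G.biUnion id).filter fun v => {v} ∈ G

/-- Contractibility, defined inductively: a single vertex complex is contractible, and `G`
is contractible if there is `x ∈ G` with both `S(x)` and `G \ U(x)` contractible. -/
inductive Contractible : Finset (Finset V) → Prop where
  | point (v : V) : Contractible ({({v} : Finset V)} : Finset (Finset V))
  | step (G : Finset (Finset V)) (x : Finset V) (hx : x ∈ G)
      (hS : Contractible (sphere G x)) (hG : Contractible (G \ star G x)) :
      Contractible G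

mutual
  /-- `G` is a `d`-manifold (`d ≥ 0`): every unit sphere `S(x)` is a `(d-1)`-sphere. -/
  inductive IsManifold : ℤ → Finset (Finset V) → Prop where
    | mk (d : ℤ) (G : Finset (Finset V)) (hd : 0 ≤ d)
        (h : ∀ x ∈ G, IsSphere (d - 1) (sphere G x)) : IsManifold d G

  /-- `d`-spheres: the empty complex is the `(-1)`-sphere, and a `d`-sphere is a
  `d`-manifold `G` such that `G \ U(x)` is contractible for some `x ∈ G`. -/
  inductive IsSphere : ℤ → Finset (Finset V) → Prop where
    | empty : IsSphere (-1) (∅ : Finset (Finset V))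
    | mk (d : ℤ) (G : Finset (Finset V)) (hm : IsManifold d G)
        (h : ∃ x ∈ G, Contractible (G \ star G x)) : IsSphere d G
end

/-- The f-function `f_G(t) = 1 + Σ_{k ≥ 0} f_k(G) t^(k+1) = 1 + Σ_{x ∈ G} t^|x|`. -/
noncomputable def fPoly (G : Finset (Finset V)) : Polynomial ℚ :=
  1 + ∑ x ∈ G, Polynomial.X ^ x.card

/-- `F_H(t) = ∫_0^t f_H(s) ds = t + Σ_{k ≥ 0} f_k(H) t^(k+2)/(k+2)`. -/
noncomputable def FPoly (H : Finset (Finset V)) : Polynomial ℚ :=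
  Polynomial.X +
    ∑ x ∈ H, Polynomial.C (((x.card : ℚ) + 1)⁻¹) * Polynomial.X ^ (x.card + 1)

/-- The join `G + H = G ∪ H ∪ {x ∪ y : x ∈ G, y ∈ H}`. -/
def joinC (G H : Finset (Finset V)) : Finset (Finset V) :=
  G ∪ H ∪ (G ×ˢ H).image fun p => p.1 ∪ p.2

/-- The barycentric refinement: simplices are the nonempty chains in `(G, ⊆)`. -/
def bary (G : Finset (Finset V)) : Finset (Finset (Finset V)) :=
  G.powerset.filter fun c => c.Nonempty ∧ ∀ x ∈ c, ∀ y ∈ c, x ⊆ y ∨ y ⊆ x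

/-- `f` is locally injective: distinct vertices of a common simplex have distinct values. -/
def LocallyInjective (G : Finset (Finset V)) (f : V → ℤ) : Prop :=
  ∀ x ∈ G, ∀ v ∈ x, ∀ u ∈ x, v ≠ u → f v ≠ f u

lemma sphere_isComplex {G : Finset (Finset V)} (hG : IsComplex G) (x : Finset V) :
    IsComplex (sphere G x) := by
  intro z hz
  simp only [sphere, ball, star, mem_sdiff, mem_filter] at hz
  obtain ⟨⟨hzG, y, hyG, hxy, hzy⟩, hns⟩ := hz
  refine ⟨(hG z hzG).1, fun z' hz' hz'ne => ?_⟩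
  simp only [sphere, ball, star, mem_sdiff, mem_filter]
  have hz'G : z' ∈ G := (hG z hzG).2 z' hz' hz'ne
  refine ⟨⟨hz'G, y, hyG, hxy, hz'.trans hzy⟩, ?_⟩
  intro h
  exact hns ⟨hzG, h.2.trans hz'⟩

lemma sdiff_star_isComplex {G : Finset (Finset V)} (hG : IsComplex G) (x : Finset V) :
    IsComplex (G \ star G x) := by
  intro z hz
  simp only [star, mem_sdiff, mem_filter] at hz
  obtain ⟨hzG, hns⟩ := hz
  refine ⟨(hG z hzG).1, fun z' hz' hz'ne => ?_⟩
  have hz'G : z' ∈ G := (hG z hzG).2 z' hz' hz'ne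
  simp only [star, mem_sdiff, mem_filter]
  exact ⟨hz'G, fun h => hns ⟨hzG, h.2.trans hz'⟩⟩

lemma w_insert {v : V} {z : Finset V} (hv : v ∉ z) (hz : z.Nonempty) :
    w (insert v z) = - w z := by
  have h1 : (insert v z).card = z.card + 1 := Finset.card_insert_of_notMem hv
  have h2 : 1 ≤ z.card := Finset.card_pos.mpr hz
  unfold w
  rw [h1]
  have : z.card + 1 - 1 = (z.card - 1) + 1 := by omega
  rw [this, pow_succ]
  ring

lemma chi_split {G : Finset (Finset V)} (x : Finset V) :
    chi G = chi (G \ star G x) + chi (star G x) := by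
  unfold chi
  exact (Finset.sum_sdiff (show star G x ⊆ G from Finset.filter_subset _ _)).symm

lemma star_subset_ball {G : Finset (Finset V)} (x : Finset V) :
    star G x ⊆ ball G x := by
  intro y hy
  simp only [star, mem_filter] at hy
  simp only [ball, mem_filter]
  exact ⟨hy.1, y, hy.1, hy.2, Finset.Subset.refl y⟩

lemma chi_ball_split {G : Finset (Finset V)} (x : Finset V) :
    chi (ball G x) = chi (sphere G x) + chi (star G x) := by
  unfold chi sphere
  exact (Finset.sum_sdiff (star_subset_ball x)).symm

lemma chi_ball {G : Finset (Finset V)} (hG : IsComplex G) {x : Finset V} (hx : x ∈ G) :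
    chi (ball G x) = 1 := by
  obtain ⟨v, hv⟩ := (hG x hx).1
  have hvG : ({v} : Finset V) ∈ G :=
    (hG x hx).2 {v} (Finset.singleton_subset_iff.mpr hv) ⟨v, Finset.mem_singleton_self v⟩
  have hvB : ({v} : Finset V) ∈ ball G x := by
    simp only [ball, mem_filter]
    exact ⟨hvG, x, hx, Finset.Subset.refl x, Finset.singleton_subset_iff.mpr hv⟩
  have key : ∑ z ∈ ball G x \ {({v} : Finset V)}, w z = 0 := by
    apply Finset.sum_involution
      (g := fun z _ => if v ∈ z then z.erase v else insert v z)
    case g_mem =>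
      intro z hz
      simp only [mem_sdiff, Finset.mem_singleton] at hz
      obtain ⟨hzB, hzne⟩ := hz
      simp only [ball, mem_filter] at hzB
      obtain ⟨hzG, y, hyG, hxy, hzy⟩ := hzB
      by_cases hvz : v ∈ z
      · rw [if_pos hvz]
        simp only [mem_sdiff, Finset.mem_singleton, ball, mem_filter]
        have hne : (z.erase v).Nonempty := by
          rcases Finset.eq_empty_or_nonempty (z.erase v) with h | h
          · exfalso; apply hzne
            apply Finset.Subset.antisymm
            · intro u hu
              by_contra hc
              have : u ∈ z.erase v := Finset.mem_erase.mpr ⟨by simpa using hc, hu⟩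
              simp [h] at this
            · exact Finset.singleton_subset_iff.mpr hvz
          · exact h
        have hsub : z.erase v ⊆ z := Finset.erase_subset v z
        refine ⟨⟨(hG z hzG).2 _ hsub hne, y, hyG, hxy, hsub.trans hzy⟩, ?_⟩
        intro h
        have : v ∈ z.erase v := h ▸ Finset.mem_singleton_self v
        exact (Finset.notMem_erase v z) this
      · rw [if_neg hvz]
        simp only [mem_sdiff, Finset.mem_singleton, ball, mem_filter]
        have hvy : v ∈ y := hxy hv
        have hsub : insert v z ⊆ y := Finset.insert_subset hvy hzy
        have hne : (insert v z).Nonempty := Finset.insert_nonempty v z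
        refine ⟨⟨(hG y hyG).2 _ hsub hne, y, hyG, hxy, hsub⟩, ?_⟩
        intro h
        obtain ⟨u, hu⟩ := (hG z hzG).1
        have : u ∈ insert v z := Finset.mem_insert_of_mem hu
        rw [h] at this
        simp only [Finset.mem_singleton] at this
        exact hvz (this ▸ hu)
    case hg₁ =>
      intro z hz
      simp only [mem_sdiff, Finset.mem_singleton] at hz
      obtain ⟨hzB, hzne⟩ := hz
      simp only [ball, mem_filter] at hzB
      obtain ⟨hzG, _⟩ := hzB
      by_cases hvz : v ∈ z
      · simp only [if_pos hvz]
        have hne : (z.erase v).Nonempty := by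
          rcases Finset.eq_empty_or_nonempty (z.erase v) with h | h
          · exfalso; apply hzne
            apply Finset.Subset.antisymm
            · intro u hu
              by_contra hc
              have : u ∈ z.erase v := Finset.mem_erase.mpr ⟨by simpa using hc, hu⟩
              simp [h] at this
            · exact Finset.singleton_subset_iff.mpr hvz
          · exact h
        have : w z = - w (z.erase v) := by
          have := w_insert (Finset.notMem_erase v z) hne
          rw [Finset.insert_erase hvz] at this
          rw [this]
        omega
      · simp only [if_neg hvz]
        have := w_insert hvz (hG z hzG).1
        omega
    case hg₃ =>
      intro z hz _
      by_cases hvz : v ∈ z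
      · simp only [if_pos hvz]
        intro h
        exact (Finset.notMem_erase v z) (h.symm ▸ hvz)
      · simp only [if_neg hvz]
        intro h
        exact hvz (h ▸ Finset.mem_insert_self v z)
    case hg₄ =>
      intro z hz
      by_cases hvz : v ∈ z
      · rw [if_pos hvz, if_neg (Finset.notMem_erase v z), Finset.insert_erase hvz]
      · rw [if_neg hvz, if_pos (Finset.mem_insert_self v z), Finset.erase_insert hvz]
  have : chi (ball G x) = (∑ z ∈ ball G x \ {({v} : Finset V)}, w z) + w {v} := by
    unfold chi
    rw [← Finset.sum_sdiff (Finset.singleton_subset_iff.mpr hvB)]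
    simp
  rw [this, key]
  simp [w]

lemma chi_contractible : ∀ (G : Finset (Finset V)), Contractible G → IsComplex G → chi G = 1 := by
  intro G hc
  induction hc with
  | point v => intro _; simp [chi, w]
  | step G x hx hS hGU ihS ihG =>
    intro hG
    have h1 := chi_split (G := G) x
    have h2 := chi_ball_split (G := G) x
    have h3 := chi_ball hG hx
    have h4 := ihS (sphere_isComplex hG x)
    have h5 := ihG (sdiff_star_isComplex hG x)
    omega

lemma sphere_chi : ∀ (d : ℤ) (G : Finset (Finset V)), IsSphere d G → IsComplex G →
    (chi G : ℚ) = 1 + (-1 : ℚ) ^ d := by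
  intro d G hs
  refine IsSphere.rec
    (motive_1 := fun d G _ => IsComplex G → ∀ x ∈ G,
      (chi (sphere G x) : ℚ) = 1 + (-1 : ℚ) ^ (d - 1))
    (motive_2 := fun d G _ => IsComplex G → (chi G : ℚ) = 1 + (-1 : ℚ) ^ d)
    ?_ ?_ ?_ hs
  · -- manifold case
    intro d G hd h ih hG x hx
    exact ih x hx (sphere_isComplex hG x)
  · -- empty sphere
    intro _
    simp [chi]
  · -- sphere mk
    intro d G hm hex ihm hG
    obtain ⟨x, hx, hcon⟩ := hex
    have h1 := chi_split (G := G) x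
    have h2 := chi_ball_split (G := G) x
    have h3 := chi_ball hG hx
    have h4 := ihm hG x hx
    have h5 := chi_contractible _ hcon (sdiff_star_isComplex hG x)
    have hpow : (-1 : ℚ) ^ d = -(-1 : ℚ) ^ (d - 1) := by
      have h := zpow_add_one₀ (by norm_num : (-1 : ℚ) ≠ 0) (d - 1)
      have he : d - 1 + 1 = d := by ring
      rw [he] at h
      rw [h]; ring
    have h2' : (chi (ball G x) : ℚ) = (chi (sphere G x) : ℚ) + (chi (star G x) : ℚ) := by
      exact_mod_cast h2
    have hchiU : (chi (star G x) : ℚ) = (chi (ball G x) : ℚ) - (chi (sphere G x) : ℚ) := by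
      linarith
    have : (chi G : ℚ) = (chi (G \ star G x) : ℚ) + (chi (star G x) : ℚ) := by
      exact_mod_cast h1
    rw [this, hchiU, h4, hpow, h5, h3]
    push_cast
    ring

/-- Euler Gem: every `d`-sphere (`d ≥ -1`) has `χ(G) = 1 + (-1)^d`. -/
theorem euler_gem {V : Type} [DecidableEq V] (d : ℤ) (hd : -1 ≤ d)
    (G : Finset (Finset V)) (hG : IsComplex G) (hs : IsSphere d G) :
    (chi G : ℚ) = 1 + (-1 : ℚ) ^ d :=
  sphere_chi d G hs hG

end SphereFormula
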